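/- arXiv:1410.5450 — 2 statements merged into one kernel-verified Lean document; each statement's English description precedes it below -/
import Mathlib

section
/- Let d ≥ 1 and n ≥ d be integers, and set n_1 = 1, n_2 = n, n_3 = n^2. Then for all integers x_1, x_2, x_3 with x_1 n_1 + x_2 n_2 + x_3 n_3 = 0 such that exactly one x_j is positive, one has floor(x_j n_j / n_1) + floor(x_j n_j / n_2) + floor(x_j n_j / n_3) > d. -/
/-- The chain structure `(1, n, n²)` with `n ≥ d ≥ 1` satisfies the three-edge
genericity condition (II) of Corollary 4.2. -/
theorem stmt6 (d n : ℕ) (hd : 1 ≤ d) (hn : d ≤ n) :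
    ∀ x1 x2 x3 : ℤ,
      x1 * 1 + x2 * (n : ℤ) + x3 * (n : ℤ) ^ 2 = 0 →
      ((0 < x1 ∧ x2 ≤ 0 ∧ x3 ≤ 0 →
          (x1 * 1) / 1 + (x1 * 1) / (n : ℤ) + (x1 * 1) / (n : ℤ) ^ 2 > (d : ℤ)) ∧
       (0 < x2 ∧ x1 ≤ 0 ∧ x3 ≤ 0 →
          (x2 * (n : ℤ)) / 1 + (x2 * (n : ℤ)) / (n : ℤ) + (x2 * (n : ℤ)) / (n : ℤ) ^ 2 > (d : ℤ)) ∧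
       (0 < x3 ∧ x1 ≤ 0 ∧ x2 ≤ 0 →
          (x3 * (n : ℤ) ^ 2) / 1 + (x3 * (n : ℤ) ^ 2) / (n : ℤ) + (x3 * (n : ℤ) ^ 2) / (n : ℤ) ^ 2
            > (d : ℤ))) := by
  intro x1 x2 x3 h
  have hdn : (d : ℤ) ≤ n := by exact_mod_cast hn
  have hd1 : (1 : ℤ) ≤ d := by exact_mod_cast hd
  have hn0 : (0 : ℤ) < n := by linarith
  refine ⟨?_, ?_, ?_⟩
  · rintro ⟨h1, h2, h3⟩
    have hx1 : (n : ℤ) ≤ x1 := by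
      rcases lt_or_ge x2 0 with hc | hc
      · nlinarith
      · have hx2 : x2 = 0 := le_antisymm h2 hc
        have hx3 : x3 < 0 := by
          rcases lt_or_ge x3 0 with hc' | hc'
          · exact hc'
          · have : x3 = 0 := le_antisymm h3 hc'
            simp [hx2, this] at h; omega
        nlinarith
    simp only [mul_one, Int.ediv_one]
    have e2 : (1:ℤ) ≤ x1 / n := by
      rw [Int.le_ediv_iff_mul_le hn0]; linarith
    have e3 : (0:ℤ) ≤ x1 / (n:ℤ)^2 := Int.ediv_nonneg (by linarith) (by positivity)
    linarith
  · rintro ⟨h2, h1, h3⟩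
    simp only [Int.ediv_one]
    have e1 : (n:ℤ) ≤ x2 * n := by nlinarith
    have e2 : x2 * n / n = x2 := Int.mul_ediv_cancel _ hn0.ne'
    have e3 : (0:ℤ) ≤ x2 * n / (n:ℤ)^2 := Int.ediv_nonneg (by nlinarith) (by positivity)
    rw [e2]; linarith
  · rintro ⟨h3, h1, h2⟩
    simp only [Int.ediv_one]
    have e1 : (n:ℤ) ≤ x3 * (n:ℤ)^2 := by nlinarith
    have e2 : (1:ℤ) ≤ x3 * (n:ℤ)^2 / n := by
      rw [Int.le_ediv_iff_mul_le hn0]; nlinarith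
    have e3 : x3 * (n:ℤ)^2 / (n:ℤ)^2 = x3 := Int.mul_ediv_cancel _ (by positivity)
    rw [e3]; linarith
end

section
/- Let d ≥ 1 and let n, n' be relatively prime integers with n, n' ≥ d. Set n_1 = 1, n_2 = n, n_3 = n'. Then for all integers x_1, x_2, x_3 with x_1 n_1 + x_2 n_2 + x_3 n_3 = 0 such that exactly one x_j is positive, one has floor(x_j n_j / n_1) + floor(x_j n_j / n_2) + floor(x_j n_j / n_3) > d. -/
/-- The chain structure `(1, n, n')` with `gcd(n, n') = 1` and `n, n' ≥ d ≥ 1`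
satisfies the three-edge genericity condition (II) of Corollary 4.2. -/
theorem stmt7 (d n n' : ℕ) (hd : 1 ≤ d) (hn : d ≤ n) (hn' : d ≤ n')
    (hcop : Nat.Coprime n n') :
    ∀ x1 x2 x3 : ℤ,
      x1 * 1 + x2 * (n : ℤ) + x3 * (n' : ℤ) = 0 →
      ((0 < x1 ∧ x2 ≤ 0 ∧ x3 ≤ 0 →
          (x1 * 1) / 1 + (x1 * 1) / (n : ℤ) + (x1 * 1) / (n' : ℤ) > (d : ℤ)) ∧
       (0 < x2 ∧ x1 ≤ 0 ∧ x3 ≤ 0 →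
          (x2 * (n : ℤ)) / 1 + (x2 * (n : ℤ)) / (n : ℤ) + (x2 * (n : ℤ)) / (n' : ℤ) > (d : ℤ)) ∧
       (0 < x3 ∧ x1 ≤ 0 ∧ x2 ≤ 0 →
          (x3 * (n' : ℤ)) / 1 + (x3 * (n' : ℤ)) / (n : ℤ) + (x3 * (n' : ℤ)) / (n' : ℤ)
            > (d : ℤ))) := by
  intro x1 x2 x3 h
  have hnpos : (0:ℤ) < n := by exact_mod_cast (by omega : 0 < n)
  have hn'pos : (0:ℤ) < n' := by exact_mod_cast (by omega : 0 < n')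
  have hdn : (d:ℤ) ≤ n := by exact_mod_cast hn
  have hdn' : (d:ℤ) ≤ n' := by exact_mod_cast hn'
  have hd1 : (1:ℤ) ≤ d := by exact_mod_cast hd
  refine ⟨?_, ?_, ?_⟩
  · rintro ⟨h1, h2, h3⟩
    have e1 : -x2 ≤ x1 * 1 / (n:ℤ) := by
      rw [Int.le_ediv_iff_mul_le hnpos]; nlinarith
    have e2 : -x3 ≤ x1 * 1 / (n':ℤ) := by
      rw [Int.le_ediv_iff_mul_le hn'pos]; nlinarith
    have hs : 1 ≤ -x2 - x3 := by nlinarith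
    have hx : (d:ℤ) * (-x2 - x3) ≤ x1 := by nlinarith
    have : x1 * 1 / 1 = x1 := by simp
    rw [this]
    nlinarith
  · rintro ⟨h2, h1, h3⟩
    have e : 0 ≤ x2 * n / (n':ℤ) := Int.ediv_nonneg (by positivity) (le_of_lt hn'pos)
    have e2 : x2 * (n:ℤ) / n = x2 := Int.mul_ediv_cancel _ (ne_of_gt hnpos)
    have e1 : x2 * (n:ℤ) / 1 = x2 * n := Int.ediv_one _
    rw [e1, e2]
    nlinarith
  · rintro ⟨h3, h1, h2⟩
    have e : 0 ≤ x3 * n' / (n:ℤ) := Int.ediv_nonneg (by positivity) (le_of_lt hnpos)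
    have e2 : x3 * (n':ℤ) / n' = x3 := Int.mul_ediv_cancel _ (ne_of_gt hn'pos)
    have e1 : x3 * (n':ℤ) / 1 = x3 * n' := Int.ediv_one _
    rw [e1, e2]
    nlinarith
end
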